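/- arXiv:2501.06078 — 5 statements merged into one kernel-verified Lean document; each statement's English description precedes it below -/
import Mathlib

section
/- Let S⁺, S⁻ ⊆ Mⁿ be finite sets of points in a metric space (Mⁿ, dₙ), let k be an odd positive integer, and define the optimistic k-NN classifier f(x̄) = 1 iff there exists T ⊆ S⁺ ∪ S⁻ of size k with a majority of points in S⁺ such that dₙ(x̄, ȳ) ≤ dₙ(x̄, z̄) for all ȳ ∈ T and z̄ ∈ (S⁺ ∪ S⁻) \ T. Then f(x̄) = 1 if and only if there exist A ⊆ S⁺ of size (k+1)/2 and B ⊆ S⁻ of size at most (k−1)/2 such that dₙ(x̄, ā) ≤ dₙ(x̄, c̄) for every ā ∈ A and c̄ ∈ S⁻ \ B. -/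
/-!
Only the ranking of the points by their distance to `x` matters. A majority-positive set `T` of
`k` nearest neighbours yields `A` as any `(k + 1) / 2` positives of `T` and `B` as the negatives
of `T`. Conversely, take `T` to be `k` points that are smallest for the lexicographic key
`(d x z, z ∈ S⁻ \ B)`. If `T` had at most `(k - 1) / 2` positives it would contain at least
`(k + 1) / 2 > |B|` negatives, hence some `c ∈ S⁻ \ B`; every `a ∈ A` is then strictly below `c` in
the key, so `A ⊆ T` and `T` has `(k + 1) / 2` positives after all.
-/

open Finset

section

variable {α β : Type*} [DecidableEq α] [LinearOrder β]

theorem Finset.exists_subset_card_eq_forall_le (f : α → β) {k : ℕ} {s : Finset α}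
    (hk : k ≤ #s) : ∃ t ⊆ s, #t = k ∧ ∀ y ∈ t, ∀ z ∈ s \ t, f y ≤ f z := by
  induction k generalizing s with
  | zero => exact ⟨∅, empty_subset s, rfl, by simp⟩
  | succ k ih =>
    obtain ⟨m, hm, hmin⟩ := s.exists_min_image f (card_pos.mp (by omega))
    obtain ⟨t, hts, htk, hnear⟩ := ih (s := s.erase m) (by rw [card_erase_of_mem hm]; omega)
    have hmt : m ∉ t := fun h => notMem_erase m s (hts h)
    refine ⟨insert m t, insert_subset hm (hts.trans (erase_subset m s)),
      by rw [card_insert_of_notMem hmt, htk], ?_⟩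
    intro y hy z hz
    rw [mem_sdiff, mem_insert, not_or] at hz
    obtain rfl | hyt := mem_insert.mp hy
    · exact hmin z hz.1
    · exact hnear y hyt z (mem_sdiff.mpr ⟨mem_erase.mpr ⟨hz.2.1, hz.1⟩, hz.2.2⟩)

variable {f : α → β} {P N T A B : Finset α} {k : ℕ}

theorem exists_half_subset_of_majority_nearest (hdisj : Disjoint P N) (hT : T ⊆ P ∪ N)
    (hTk : #T = k) (hmaj : k < 2 * #(T ∩ P))
    (hnear : ∀ y ∈ T, ∀ z ∈ (P ∪ N) \ T, f y ≤ f z) :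
    ∃ A ⊆ P, #A = (k + 1) / 2 ∧ ∃ B ⊆ N, #B ≤ (k - 1) / 2 ∧
      ∀ a ∈ A, ∀ c ∈ N \ B, f a ≤ f c := by
  have hsplit := card_inter_add_card_sdiff T P
  obtain ⟨A, hAT, hAk⟩ := exists_subset_card_eq (s := T ∩ P) (n := (k + 1) / 2) (by omega)
  refine ⟨A, hAT.trans inter_subset_right, hAk, T \ P, sdiff_le_iff.mpr hT, by omega, ?_⟩
  intro a ha c hc
  obtain ⟨hcN, hcB⟩ := mem_sdiff.mp hc
  have hcT : c ∉ T := fun h =>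
    hcB (mem_sdiff.mpr ⟨h, disjoint_right.mp hdisj hcN⟩)
  exact hnear a (mem_inter.mp (hAT ha)).1 c (mem_sdiff.mpr ⟨mem_union_right P hcN, hcT⟩)

theorem exists_majority_nearest_of_half_subset (hdisj : Disjoint P N) (hk : Odd k)
    (hkPN : k ≤ #(P ∪ N)) (hAP : A ⊆ P) (hAk : #A = (k + 1) / 2) (hBk : #B ≤ (k - 1) / 2)
    (hnear : ∀ a ∈ A, ∀ c ∈ N \ B, f a ≤ f c) :
    ∃ T ⊆ P ∪ N, #T = k ∧ k < 2 * #(T ∩ P) ∧ ∀ y ∈ T, ∀ z ∈ (P ∪ N) \ T, f y ≤ f z := by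
  let key : α → β ×ₗ Bool := fun z => toLex (f z, decide (z ∈ N \ B))
  obtain ⟨T, hT, hTk, hkey⟩ := exists_subset_card_eq_forall_le key hkPN
  have hnear_T : ∀ y ∈ T, ∀ z ∈ (P ∪ N) \ T, f y ≤ f z := fun y hy z hz =>
    (Prod.Lex.monotone_fst _ _ (hkey y hy z hz) :)
  refine ⟨T, hT, hTk, ?_, hnear_T⟩
  by_contra! hmin
  obtain ⟨t, rfl⟩ := hk
  obtain ⟨c, hcT, hcB⟩ : ∃ c ∈ T \ P, c ∉ B :=
    exists_mem_notMem_of_card_lt_card (by have := card_inter_add_card_sdiff T P; omega)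
  have hcNB : c ∈ N \ B := mem_sdiff.mpr ⟨sdiff_le_iff.mpr hT hcT, hcB⟩
  have hAT : A ⊆ T := fun a ha => by
    by_contra haT
    have haNB : a ∉ N \ B := fun h => disjoint_left.mp hdisj (hAP ha) (mem_sdiff.mp h).1
    have hca := hkey c (mem_sdiff.mp hcT).1 a (mem_sdiff.mpr ⟨mem_union_left N (hAP ha), haT⟩)
    rcases Prod.Lex.toLex_le_toLex.mp hca with hlt | ⟨-, hle⟩
    · exact (hnear a ha c hcNB).not_gt hlt
    · simp [haNB, hcNB, Bool.le_iff_imp] at hle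
  have := card_le_card (subset_inter hAT hAP)
  omega

end

theorem optimistic_knn_pos_characterization_general
    {M : Type*} {n : ℕ} [DecidableEq (Fin n → M)]
    (d : (Fin n → M) → (Fin n → M) → ℝ)
    (k : ℕ) (hk_odd : Odd k)
    (Sp Sm : Finset (Fin n → M)) (hdisj : Disjoint Sp Sm)
    (hcard : k ≤ (Sp ∪ Sm).card)
    (x : Fin n → M) :
    (∃ T ⊆ Sp ∪ Sm, T.card = k ∧ k < 2 * (T ∩ Sp).card ∧
      ∀ y ∈ T, ∀ z ∈ (Sp ∪ Sm) \ T, d x y ≤ d x z) ↔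
    (∃ A ⊆ Sp, A.card = (k + 1) / 2 ∧ ∃ B ⊆ Sm, B.card ≤ (k - 1) / 2 ∧
      ∀ a ∈ A, ∀ c ∈ Sm \ B, d x a ≤ d x c) := by
  constructor
  · rintro ⟨T, hT, hTk, hmaj, hnear⟩
    exact exists_half_subset_of_majority_nearest hdisj hT hTk hmaj hnear
  · rintro ⟨A, hAP, hAk, B, -, hBk, hnear⟩
    exact exists_majority_nearest_of_half_subset hdisj hk_odd hcard hAP hAk hBk hnear

/-- Proposition 1(a): characterization of the optimistic k-NN classifier's positive value. -/
theorem optimistic_knn_pos_characterization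
    {M : Type*} {n : ℕ} [DecidableEq (Fin n → M)]
    (d : (Fin n → M) → (Fin n → M) → ℝ)
    (hd_nonneg : ∀ a b, 0 ≤ d a b)
    (hd_symm : ∀ a b, d a b = d b a)
    (hd_triangle : ∀ a b c, d a c ≤ d a b + d b c)
    (hd_eq : ∀ a b, d a b = 0 ↔ a = b)
    (k : ℕ) (hk_odd : Odd k) (hk_pos : 1 ≤ k)
    (Sp Sm : Finset (Fin n → M)) (hdisj : Disjoint Sp Sm)
    (hcard : k ≤ (Sp ∪ Sm).card)
    (x : Fin n → M) :
    (∃ T ⊆ Sp ∪ Sm, T.card = k ∧ k < 2 * (T ∩ Sp).card ∧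
      ∀ y ∈ T, ∀ z ∈ (Sp ∪ Sm) \ T, d x y ≤ d x z) ↔
    (∃ A ⊆ Sp, A.card = (k + 1) / 2 ∧ ∃ B ⊆ Sm, B.card ≤ (k - 1) / 2 ∧
      ∀ a ∈ A, ∀ c ∈ Sm \ B, d x a ≤ d x c) :=
  optimistic_knn_pos_characterization_general d k hk_odd Sp Sm hdisj hcard x
end

section
/- With the same setup, f(x̄) = 0 if and only if there exist A ⊆ S⁻ of size (k+1)/2 and B ⊆ S⁺ of size at most (k−1)/2 such that dₙ(x̄, ā) < dₙ(x̄, c̄) for every ā ∈ A and c̄ ∈ S⁺ \ B. -/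
/-!
Choose the `k` points nearest to `x`, breaking ties in favour of `S⁺`. If they have no positive
majority, at least `(k + 1) / 2` of them are negative, and by the tie-breaking every one of those
is strictly nearer than each positive point left out; the positive points chosen form `B`.
Conversely, if `A` and `B` exist, a nearest `k`-set with positive majority contains a positive
point outside `B`, hence all of the strictly nearer `A`, and so has more than `k` elements.
-/

open Finset

namespace Finset

variable {α β : Type*} [DecidableEq α] [LinearOrder β]

theorem exists_subset_card_eq_forall_le_s1 (f : α → β) {S : Finset α} {j : ℕ} (hj : j ≤ #S) :
    ∃ T ⊆ S, #T = j ∧ ∀ y ∈ T, ∀ z ∈ S \ T, f y ≤ f z := by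
  induction j with
  | zero => exact ⟨∅, empty_subset S, rfl, by simp⟩
  | succ j ih =>
    obtain ⟨T, hTS, hT, hle⟩ := ih (Nat.le_of_succ_le hj)
    have hne : (S \ T).Nonempty := by
      rw [← card_pos, card_sdiff_of_subset hTS]
      omega
    obtain ⟨w, hw, hwmin⟩ := exists_min_image (S \ T) f hne
    rw [mem_sdiff] at hw
    refine ⟨insert w T, insert_subset hw.1 hTS, by rw [card_insert_of_notMem hw.2, hT], ?_⟩
    intro y hy z hz
    have hz' : z ∈ S \ T := sdiff_subset_sdiff le_rfl (subset_insert w T) hz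
    rcases mem_insert.mp hy with rfl | hy
    · exact hwmin z hz'
    · exact hle y hy z hz'

theorem exists_subset_card_eq_forall_le_preferring (g : α → β) (P : Finset α) {S : Finset α}
    {j : ℕ} (hj : j ≤ #S) :
    ∃ T ⊆ S, #T = j ∧ (∀ y ∈ T, ∀ z ∈ S \ T, g y ≤ g z) ∧
      ∀ y ∈ T, y ∉ P → ∀ z ∈ S \ T, z ∈ P → g y < g z := by
  -- Lexicographic key: among `g`-ties, members of `P` (key `false`) come first.
  obtain ⟨T, hTS, hT, hle⟩ :=
    exists_subset_card_eq_forall_le_s1 (fun y => toLex (g y, decide (y ∉ P))) hj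
  refine ⟨T, hTS, hT, fun y hy z hz => ?_, fun y hy hyP z hz hzP => ?_⟩
  · rcases Prod.Lex.toLex_le_toLex.mp (hle y hy z hz) with h | h
    exacts [h.le, h.1.le]
  · rcases Prod.Lex.toLex_le_toLex.mp (hle y hy z hz) with h | ⟨-, h⟩
    · exact h
    · exact absurd h (by simp [hyP, hzP])

theorem card_inter_add_card_inter_of_subset_union {Sp Sm T : Finset α} (hdisj : Disjoint Sp Sm)
    (hT : T ⊆ Sp ∪ Sm) : #(T ∩ Sp) + #(T ∩ Sm) = #T := by
  rw [← card_union_of_disjoint (disjoint_of_subset_left inter_subset_right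
      (disjoint_of_subset_right inter_subset_right hdisj)),
    ← inter_union_distrib_left, inter_eq_left.mpr hT]

end Finset

section OptimisticKNN

variable {α β : Type*} [DecidableEq α] [LinearOrder β] (g : α → β) {Sp Sm : Finset α}

theorem exists_strictlyCloser_of_not_exists_majority {k : ℕ} (hk : Odd k) (hdisj : Disjoint Sp Sm)
    (hcard : k ≤ #(Sp ∪ Sm))
    (hno : ¬ ∃ T ⊆ Sp ∪ Sm, #T = k ∧ k < 2 * #(T ∩ Sp) ∧
      ∀ y ∈ T, ∀ z ∈ (Sp ∪ Sm) \ T, g y ≤ g z) :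
    ∃ A ⊆ Sm, #A = (k + 1) / 2 ∧ ∃ B ⊆ Sp, #B ≤ (k - 1) / 2 ∧
      ∀ a ∈ A, ∀ c ∈ Sp \ B, g a < g c := by
  obtain ⟨r, rfl⟩ := hk
  obtain ⟨T, hTS, hT, hle, hprefer⟩ := exists_subset_card_eq_forall_le_preferring g Sp hcard
  have hsplit := card_inter_add_card_inter_of_subset_union hdisj hTS
  have hminority : ¬ 2 * r + 1 < 2 * #(T ∩ Sp) := fun hmaj => hno ⟨T, hTS, hT, hmaj, hle⟩
  obtain ⟨A, hAT, hA⟩ := exists_subset_card_eq (s := T ∩ Sm) (n := r + 1) (by omega)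
  refine ⟨A, hAT.trans inter_subset_right, by omega, T ∩ Sp, inter_subset_right, by omega, ?_⟩
  intro a ha c hc
  obtain ⟨haT, haSm⟩ := mem_inter.mp (hAT ha)
  obtain ⟨hcSp, hcB⟩ := mem_sdiff.mp hc
  exact hprefer a haT (disjoint_right.mp hdisj haSm) c
    (mem_sdiff.mpr ⟨mem_union_left _ hcSp, fun hcT => hcB (mem_inter.mpr ⟨hcT, hcSp⟩)⟩) hcSp

theorem not_exists_majority_of_exists_strictlyCloser {k : ℕ} (hdisj : Disjoint Sp Sm)
    (hcloser : ∃ A ⊆ Sm, #A = (k + 1) / 2 ∧ ∃ B ⊆ Sp, #B ≤ (k - 1) / 2 ∧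
      ∀ a ∈ A, ∀ c ∈ Sp \ B, g a < g c) :
    ¬ ∃ T ⊆ Sp ∪ Sm, #T = k ∧ k < 2 * #(T ∩ Sp) ∧
      ∀ y ∈ T, ∀ z ∈ (Sp ∪ Sm) \ T, g y ≤ g z := by
  rintro ⟨T, hTS, hT, hmaj, hle⟩
  obtain ⟨A, hASm, hA, B, hBSp, hB, hlt⟩ := hcloser
  obtain ⟨c, hcT, hcB⟩ := exists_mem_notMem_of_card_lt_card (s := B) (t := T ∩ Sp) (by omega)
  obtain ⟨hcT, hcSp⟩ := mem_inter.mp hcT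
  have hAT : A ⊆ T ∩ Sm := by
    intro a ha
    refine mem_inter.mpr ⟨?_, hASm ha⟩
    by_contra haT
    have := hle c hcT a (mem_sdiff.mpr ⟨mem_union_right _ (hASm ha), haT⟩)
    exact (hlt a ha c (mem_sdiff.mpr ⟨hcSp, hcB⟩)).not_ge this
  have hsplit := card_inter_add_card_inter_of_subset_union hdisj hTS
  have := card_le_card hAT
  omega

end OptimisticKNN

theorem optimistic_knn_neg_characterization_general
    {M : Type*} {n : ℕ} [DecidableEq (Fin n → M)]
    (d : (Fin n → M) → (Fin n → M) → ℝ)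
    (k : ℕ) (hk_odd : Odd k)
    (Sp Sm : Finset (Fin n → M)) (hdisj : Disjoint Sp Sm)
    (hcard : k ≤ (Sp ∪ Sm).card)
    (x : Fin n → M) :
    (¬ ∃ T ⊆ Sp ∪ Sm, T.card = k ∧ k < 2 * (T ∩ Sp).card ∧
      ∀ y ∈ T, ∀ z ∈ (Sp ∪ Sm) \ T, d x y ≤ d x z) ↔
    (∃ A ⊆ Sm, A.card = (k + 1) / 2 ∧ ∃ B ⊆ Sp, B.card ≤ (k - 1) / 2 ∧
      ∀ a ∈ A, ∀ c ∈ Sp \ B, d x a < d x c) :=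
  ⟨exists_strictlyCloser_of_not_exists_majority (d x) hk_odd hdisj hcard,
    not_exists_majority_of_exists_strictlyCloser (d x) hdisj⟩

/-- Proposition 1(b): characterization of the optimistic k-NN classifier's negative value. -/
theorem optimistic_knn_neg_characterization
    {M : Type*} {n : ℕ} [DecidableEq (Fin n → M)]
    (d : (Fin n → M) → (Fin n → M) → ℝ)
    (hd_nonneg : ∀ a b, 0 ≤ d a b)
    (hd_symm : ∀ a b, d a b = d b a)
    (hd_triangle : ∀ a b c, d a c ≤ d a b + d b c)
    (hd_eq : ∀ a b, d a b = 0 ↔ a = b)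
    (k : ℕ) (hk_odd : Odd k) (hk_pos : 1 ≤ k)
    (Sp Sm : Finset (Fin n → M)) (hdisj : Disjoint Sp Sm)
    (hcard : k ≤ (Sp ∪ Sm).card)
    (x : Fin n → M) :
    (¬ ∃ T ⊆ Sp ∪ Sm, T.card = k ∧ k < 2 * (T ∩ Sp).card ∧
      ∀ y ∈ T, ∀ z ∈ (Sp ∪ Sm) \ T, d x y ≤ d x z) ↔
    (∃ A ⊆ Sm, A.card = (k + 1) / 2 ∧ ∃ B ⊆ Sp, B.card ≤ (k - 1) / 2 ∧
      ∀ a ∈ A, ∀ c ∈ Sp \ B, d x a < d x c) :=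
  optimistic_knn_neg_characterization_general d k hk_odd Sp Sm hdisj hcard x
end

section
/- Let S⁺, S⁻ ⊆ ℝⁿ be finite disjoint sets, X ⊆ {1,…,n}, and x̄ ∈ ℝⁿ with f¹(x̄) = 0, where f¹ is the optimistic 1-NN classifier under the ℓ₁-distance. Then X is not a sufficient reason for x̄ if and only if there exists ā ∈ S⁺ such that the vector ȳ defined by ȳ[i] = x̄[i] for i ∈ X and ȳ[i] = ā[i] for i ∉ X satisfies ‖ȳ − ā‖₁ ≤ ‖ȳ − c̄‖₁ for every c̄ ∈ S⁻. -/
/-- Characterization of "X is not a sufficient reason" for the optimistic 1-NN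
classifier under the ℓ₁-distance, when the input is classified negatively. -/
theorem not_sufficient_reason_iff_l1
    {n : ℕ} (Sp Sm : Finset (Fin n → ℝ)) (hdisj : Disjoint Sp Sm)
    (X : Finset (Fin n)) (x : Fin n → ℝ)
    (f1 : (Fin n → ℝ) → Prop)
    (hf1 : ∀ z : Fin n → ℝ,
      f1 z ↔ ∃ a ∈ Sp, ∀ c ∈ Sm, ∑ i, |z i - a i| ≤ ∑ i, |z i - c i|)
    (hx : ¬ f1 x) :
    (¬ ∀ y : Fin n → ℝ, (∀ i ∈ X, y i = x i) → (f1 y ↔ f1 x)) ↔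
    (∃ a ∈ Sp, ∀ c ∈ Sm,
      ∑ i, |(if i ∈ X then x i else a i) - a i| ≤
        ∑ i, |(if i ∈ X then x i else a i) - c i|) := by
  constructor
  · intro h
    push_neg at h
    obtain ⟨y, hyX, hne⟩ := h
    have hfy : f1 y := by
      rcases hne with ⟨h1, _⟩ | ⟨_, h2⟩
      · exact h1
      · exact absurd h2 hx
    obtain ⟨a, ha, hle⟩ := (hf1 y).mp hfy
    refine ⟨a, ha, fun c hc => ?_⟩
    set yb : Fin n → ℝ := fun i => if i ∈ X then x i else a i with hyb
    have key : ∀ i : Fin n,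
        |yb i - a i| + |y i - c i| ≤ |y i - a i| + |yb i - c i| := by
      intro i
      by_cases hi : i ∈ X
      · simp [hyb, hi, hyX i hi]
      · simp only [hyb, hi, if_neg, sub_self, abs_zero]
        simpa using abs_sub_le (y i) (a i) (c i)
    have hsum : ∑ i, |yb i - a i| + ∑ i, |y i - c i| ≤
        ∑ i, |y i - a i| + ∑ i, |yb i - c i| := by
      rw [← Finset.sum_add_distrib, ← Finset.sum_add_distrib]
      exact Finset.sum_le_sum fun i _ => key i
    have := hle c hc
    linarith
  · rintro ⟨a, ha, hle⟩ h
    set yb : Fin n → ℝ := fun i => if i ∈ X then x i else a i with hyb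
    have hagree : ∀ i ∈ X, yb i = x i := fun i hi => by simp [hyb, hi]
    have : f1 yb := (hf1 yb).mpr ⟨a, ha, hle⟩
    exact hx ((h yb hagree).mp this)
end

section
/- Let S⁺, S⁻ ⊆ {0,1}ⁿ be finite disjoint sets, x̄ ∈ {0,1}ⁿ with f¹(x̄) = 1 for the optimistic 1-NN classifier under Hamming distance, and X ⊆ {1,…,n}. If there exists z̄ ∈ {0,1}ⁿ agreeing with x̄ on X and such that f¹(z̄) = 0, then there exists ȳ ∈ S⁻ such that the vector ȳ_X, defined by ȳ_X[i] = x̄[i] for i ∈ X and ȳ_X[i] = ȳ[i] for i ∉ X, also satisfies f¹(ȳ_X) = 0. -/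
/-- If some vector agreeing with x on X is classified negatively by the optimistic
1-NN classifier under Hamming distance, then so is some vector of the special form y_X. -/
theorem negative_witness_of_special_form
    {n : ℕ} (Sp Sm : Finset (Fin n → Bool)) (hdisj : Disjoint Sp Sm)
    (x : Fin n → Bool) (X : Finset (Fin n))
    (dH : (Fin n → Bool) → (Fin n → Bool) → ℕ)
    (hdH : ∀ u v, dH u v = (Finset.univ.filter (fun i => u i ≠ v i)).card)
    (f1 : (Fin n → Bool) → Prop)
    (hf1 : ∀ z : Fin n → Bool, ¬ f1 z ↔ ∃ y ∈ Sm, ∀ w ∈ Sp, dH z y < dH z w)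
    (hx : f1 x)
    (z : Fin n → Bool) (hzX : ∀ i ∈ X, z i = x i) (hz : ¬ f1 z) :
    ∃ y ∈ Sm, ¬ f1 (fun i => if i ∈ X then x i else y i) := by
  obtain ⟨y, hy, hlt⟩ := (hf1 z).mp hz
  set yX : Fin n → Bool := fun i => if i ∈ X then x i else y i with hyX
  refine ⟨y, hy, (hf1 yX).mpr ⟨y, hy, ?_⟩⟩
  intro w hw
  have hzw := hlt w hw
  have h1 : dH z y = dH yX y + dH z yX := by
    simp only [hdH]
    rw [← Finset.card_union_of_disjoint]
    · congr 1
      ext i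
      by_cases hiX : i ∈ X
      · simp [hyX, hiX, hzX i hiX]
      · simp [hyX, hiX]
    · rw [Finset.disjoint_left]
      intro i hi1 hi2
      simp only [Finset.mem_filter, Finset.mem_univ, true_and, hyX] at hi1 hi2
      by_cases hiX : i ∈ X
      · simp [hiX, hzX i hiX] at hi2
      · simp [hiX] at hi1
  have h2 : dH z w ≤ dH z yX + dH yX w := by
    simp only [hdH]
    calc (Finset.univ.filter (fun i => z i ≠ w i)).card
        ≤ ((Finset.univ.filter (fun i => z i ≠ yX i)) ∪
           (Finset.univ.filter (fun i => yX i ≠ w i))).card := by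
          apply Finset.card_le_card
          intro i hi
          simp only [Finset.mem_filter, Finset.mem_univ, true_and, Finset.mem_union] at *
          by_contra h
          push_neg at h
          exact hi (h.1.trans h.2)
      _ ≤ _ := Finset.card_union_le _ _
  omega
end

section
/- Let G = (V, E) be an undirected graph with V = {1,…,n}, and for each edge eⱼ define ȳⱼ ∈ {0,1}ⁿ as its incidence vector (ȳⱼ[i] = 1 iff i ∈ eⱼ). Let S⁻ = {ȳⱼ : eⱼ ∈ E} and let S⁺ consist, for each j, of the two vectors obtained from ȳⱼ by flipping one of its two 1-entries to 0. Let x̄ = 0̄. Then a set C ⊆ {1,…,n} is a vertex cover of G if and only if C is a sufficient reason for x̄ with respect to the optimistic 1-NN classifier f¹ under Hamming distance. -/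
namespace VCaux
variable {n : ℕ}

def ham (y z : Fin n → Bool) : ℕ := (Finset.univ.filter (fun i => y i ≠ z i)).card
def supp (y : Fin n → Bool) : Finset (Fin n) := Finset.univ.filter (fun i => y i = true)

lemma ham_eq (y z : Fin n → Bool) :
    ham y z = (supp y \ supp z).card + (supp z \ supp y).card := by
  rw [← Finset.card_union_of_disjoint disjoint_sdiff_sdiff]
  unfold ham
  congr 1
  ext i
  simp only [supp, Finset.mem_filter, Finset.mem_union, Finset.mem_sdiff, Finset.mem_univ,
    true_and]
  cases y i <;> cases z i <;> simp

lemma supp_single (v : Fin n) : supp (fun i => decide (i = v)) = {v} := by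
  ext i; simp [supp]

lemma supp_pair (p q : Fin n) : supp (fun i => decide (i = p ∨ i = q)) = {p, q} := by
  ext i; simp [supp]

lemma ham_self (y : Fin n → Bool) : ham y y = 0 := by simp [ham]

lemma ham_single_true (y : Fin n → Bool) {v : Fin n} (h : y v = true) :
    ham y (fun i => decide (i = v)) = (supp y).card - 1 := by
  have hv : v ∈ supp y := by simp [supp, h]
  rw [ham_eq, supp_single]
  have h1 : ({v} : Finset (Fin n)) \ supp y = ∅ := by
    simp [Finset.sdiff_eq_empty_iff_subset, hv]
  rw [h1, Finset.card_sdiff_of_subset (by simpa using hv)]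
  simp

lemma ham_single_false (y : Fin n → Bool) {v : Fin n} (h : y v = false) :
    ham y (fun i => decide (i = v)) = (supp y).card + 1 := by
  have hv : v ∉ supp y := by simp [supp, h]
  rw [ham_eq, supp_single]
  have h1 : supp y \ {v} = supp y := by
    rw [Finset.sdiff_eq_self_iff_disjoint]; simpa using hv
  have h2 : ({v} : Finset (Fin n)) \ supp y = {v} := by
    rw [Finset.sdiff_eq_self_iff_disjoint]; simpa using hv
  rw [h1, h2, Finset.card_singleton]

lemma ham_pair_ff (y : Fin n → Bool) {p q : Fin n} (hpq : p ≠ q)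
    (hp : y p = false) (hq : y q = false) :
    ham y (fun i => decide (i = p ∨ i = q)) = (supp y).card + 2 := by
  have hp' : p ∉ supp y := by simp [supp, hp]
  have hq' : q ∉ supp y := by simp [supp, hq]
  rw [ham_eq, supp_pair]
  have h1 : supp y \ {p, q} = supp y := by
    rw [Finset.sdiff_eq_self_iff_disjoint]
    simp [Finset.disjoint_right, hp', hq']
  have h2 : ({p, q} : Finset (Fin n)) \ supp y = {p, q} := by
    rw [Finset.sdiff_eq_self_iff_disjoint]
    simp [Finset.disjoint_left, hp', hq']
  rw [h1, h2, Finset.card_pair hpq]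

lemma ham_pair_tf (y : Fin n → Bool) {p q : Fin n} (hpq : p ≠ q)
    (hp : y p = true) (hq : y q = false) :
    ham y (fun i => decide (i = p ∨ i = q)) = (supp y).card := by
  have hp' : p ∈ supp y := by simp [supp, hp]
  have hq' : q ∉ supp y := by simp [supp, hq]
  rw [ham_eq, supp_pair]
  have h1 : supp y \ {p, q} = supp y \ {p} := by
    ext i
    simp only [Finset.mem_sdiff, Finset.mem_insert, Finset.mem_singleton]
    constructor
    · rintro ⟨hi, h2⟩; exact ⟨hi, fun h => h2 (Or.inl h)⟩
    · rintro ⟨hi, h2⟩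
      refine ⟨hi, ?_⟩
      rintro (rfl | rfl)
      · exact h2 rfl
      · exact hq' hi
  have h2 : ({p, q} : Finset (Fin n)) \ supp y = {q} := by
    ext i
    simp only [Finset.mem_sdiff, Finset.mem_insert, Finset.mem_singleton]
    constructor
    · rintro ⟨rfl | rfl, h2⟩
      · exact absurd hp' h2
      · rfl
    · rintro rfl; exact ⟨Or.inr rfl, hq'⟩
  rw [h1, h2, Finset.card_sdiff_of_subset (by simpa using hp'), Finset.card_singleton]
  exact Nat.sub_add_cancel (Finset.card_pos.mpr ⟨p, hp'⟩)

lemma pair_comm (p q : Fin n) :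
    (fun i : Fin n => decide (i = p ∨ i = q)) = (fun i => decide (i = q ∨ i = p)) := by
  funext i
  exact decide_eq_decide.mpr or_comm

lemma mem_Sm {G : SimpleGraph (Fin n)} [DecidableRel G.Adj] {c : Fin n → Bool} :
    c ∈ G.edgeFinset.image (fun e => fun i => decide (i ∈ e)) ↔
      ∃ p q, G.Adj p q ∧ c = fun i => decide (i = p ∨ i = q) := by
  constructor
  · intro hc
    obtain ⟨e, he, rfl⟩ := Finset.mem_image.mp hc
    rw [SimpleGraph.mem_edgeFinset] at he
    revert he
    induction e using Sym2.ind with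
    | _ p q =>
      intro he
      rw [SimpleGraph.mem_edgeSet] at he
      exact ⟨p, q, he, by funext i; exact decide_eq_decide.mpr (Sym2.mem_iff)⟩
  · rintro ⟨p, q, h, rfl⟩
    refine Finset.mem_image.mpr ⟨s(p, q), ?_, ?_⟩
    · rw [SimpleGraph.mem_edgeFinset, SimpleGraph.mem_edgeSet]; exact h
    · funext i; exact decide_eq_decide.mpr (Sym2.mem_iff)

lemma mem_Sp {G : SimpleGraph (Fin n)} [DecidableRel G.Adj] {a : Fin n → Bool} :
    a ∈ G.edgeFinset.biUnion (fun e =>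
        (Finset.univ.filter (fun u => u ∈ e)).image
          (fun u => fun i => decide (i ∈ e) && !(decide (i = u)))) ↔
      ∃ u v, G.Adj u v ∧ a = fun i => decide (i = v) := by
  constructor
  · intro ha
    obtain ⟨e, he, ha⟩ := Finset.mem_biUnion.mp ha
    obtain ⟨u, hu, rfl⟩ := Finset.mem_image.mp ha
    rw [Finset.mem_filter] at hu
    rw [SimpleGraph.mem_edgeFinset] at he
    revert he hu
    induction e using Sym2.ind with
    | _ p q =>
      intro he hu
      rw [SimpleGraph.mem_edgeSet] at he
      have hpq : p ≠ q := G.ne_of_adj he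
      rcases Sym2.mem_iff.mp hu.2 with rfl | rfl
      · refine ⟨u, q, he, ?_⟩
        funext i
        by_cases h1 : i = u
        · subst h1; simp [Sym2.mem_iff, hpq]
        · by_cases h2 : i = q <;> simp [Sym2.mem_iff, h1, h2, hpq.symm]
      · refine ⟨u, p, he.symm, ?_⟩
        funext i
        by_cases h1 : i = u
        · subst h1; simp [Sym2.mem_iff, hpq.symm]
        · by_cases h2 : i = p <;> simp [Sym2.mem_iff, h1, h2, hpq]
  · rintro ⟨u, v, h, rfl⟩
    have hpq : u ≠ v := G.ne_of_adj h
    refine Finset.mem_biUnion.mpr ⟨s(u, v), ?_, Finset.mem_image.mpr ⟨u, ?_, ?_⟩⟩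
    · rw [SimpleGraph.mem_edgeFinset, SimpleGraph.mem_edgeSet]; exact h
    · simp [Sym2.mem_iff]
    · funext i
      by_cases h1 : i = u
      · subst h1; simp [Sym2.mem_iff, hpq]
      · by_cases h2 : i = v <;> simp [Sym2.mem_iff, h1, h2, hpq.symm]

def pf (G : SimpleGraph (Fin n)) [DecidableRel G.Adj] (z : Fin n → Bool) : Prop :=
  ∃ a ∈ G.edgeFinset.biUnion (fun e =>
        (Finset.univ.filter (fun u => u ∈ e)).image
          (fun u => fun i => decide (i ∈ e) && !(decide (i = u)))),
    ∀ c ∈ G.edgeFinset.image (fun e => fun i => decide (i ∈ e)), ham z a ≤ ham z c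

lemma pf_iff {G : SimpleGraph (Fin n)} [DecidableRel G.Adj] {z : Fin n → Bool} :
    pf G z ↔ ∃ v, (∃ u, G.Adj u v) ∧
      ∀ p q, G.Adj p q →
        ham z (fun i => decide (i = v)) ≤ ham z (fun i => decide (i = p ∨ i = q)) := by
  constructor
  · rintro ⟨a, ha, hle⟩
    obtain ⟨u, v, h, rfl⟩ := mem_Sp.mp ha
    refine ⟨v, ⟨u, h⟩, fun p q hpq => ?_⟩
    exact hle _ (mem_Sm.mpr ⟨p, q, hpq, rfl⟩)
  · rintro ⟨v, ⟨u, h⟩, hb⟩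
    refine ⟨_, mem_Sp.mpr ⟨u, v, h, rfl⟩, fun c hc => ?_⟩
    obtain ⟨p, q, hpq, rfl⟩ := mem_Sm.mp hc
    exact hb p q hpq

theorem aux (G : SimpleGraph (Fin n)) [DecidableRel G.Adj] (C : Finset (Fin n)) :
    (∀ u v : Fin n, G.Adj u v → u ∈ C ∨ v ∈ C) ↔
      (∀ y : Fin n → Bool, (∀ i ∈ C, y i = false) →
        (pf G y ↔ pf G (fun _ => false))) := by
  have hsupp0 : supp (n := n) (fun _ => false) = ∅ := by simp [supp]
  have hpf0 : (∃ p q, G.Adj p q) → pf G (fun _ => false) := by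
    rintro ⟨p0, q0, h0⟩
    refine pf_iff.mpr ⟨q0, ⟨p0, h0⟩, fun p q hpq => ?_⟩
    rw [ham_single_false _ rfl, ham_pair_ff _ (G.ne_of_adj hpq) rfl rfl, hsupp0]
    simp
  constructor
  · intro hcov y hy
    by_cases hE : ∃ p q, G.Adj p q
    · refine iff_of_true ?_ (hpf0 hE)
      obtain ⟨p0, q0, h0⟩ := hE
      have hfc : ∀ p q, G.Adj p q → y p = false ∨ y q = false := by
        intro p q h
        rcases hcov p q h with h' | h'
        · exact Or.inl (hy p h')
        · exact Or.inr (hy q h')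
      have hkey : ∀ p q, G.Adj p q →
          (supp y).card ≤ ham y (fun i => decide (i = p ∨ i = q)) := by
        intro p q h
        have hne := G.ne_of_adj h
        cases hp : y p <;> cases hq : y q
        · rw [ham_pair_ff _ hne hp hq]; omega
        · rw [pair_comm, ham_pair_tf _ hne.symm hq hp]
        · rw [ham_pair_tf _ hne hp hq]
        · rcases hfc p q h with h' | h' <;> simp_all
      by_cases hA : ∃ p q, G.Adj p q ∧ y p = true
      · obtain ⟨p, q, h, hyp⟩ := hA
        refine pf_iff.mpr ⟨p, ⟨q, h.symm⟩, fun p' q' h' => ?_⟩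
        rw [ham_single_true _ hyp]
        exact le_trans (Nat.sub_le _ _) (hkey p' q' h')
      · push_neg at hA
        have hall : ∀ p q, G.Adj p q → y p = false :=
          fun p q h => Bool.eq_false_iff.mpr (hA p q h)
        refine pf_iff.mpr ⟨q0, ⟨p0, h0⟩, fun p q h => ?_⟩
        rw [ham_single_false _ (hall q0 p0 h0.symm),
          ham_pair_ff _ (G.ne_of_adj h) (hall p q h) (hall q p h.symm)]
        omega
    · push_neg at hE
      have hno : ∀ z : Fin n → Bool, ¬ pf G z := by
        intro z hz
        obtain ⟨v, ⟨u, h⟩, _⟩ := pf_iff.mp hz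
        exact hE u v h
      exact iff_of_false (hno y) (hno _)
  · intro hsr u v huv
    by_contra hcon
    push_neg at hcon
    set y : Fin n → Bool := fun i => decide (i = u ∨ i = v) with hydef
    have hne := G.ne_of_adj huv
    have hy : ∀ i ∈ C, y i = false := by
      intro i hi
      have h1 : i ≠ u := fun h => hcon.1 (h ▸ hi)
      have h2 : i ≠ v := fun h => hcon.2 (h ▸ hi)
      simp [hydef, h1, h2]
    have hyy : pf G y := (hsr y hy).mpr (hpf0 ⟨u, v, huv⟩)
    obtain ⟨t, _, hb⟩ := pf_iff.mp hyy
    have hle := hb u v huv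
    have hcard : (supp y).card = 2 := by
      rw [hydef, supp_pair, Finset.card_pair hne]
    have hzero : ham y (fun i => decide (i = u ∨ i = v)) = 0 := ham_self y
    rw [hzero] at hle
    cases ht : y t
    · rw [ham_single_false _ ht, hcard] at hle; omega
    · rw [ham_single_true _ ht, hcard] at hle; omega

end VCaux

/-- In the vertex-cover reduction, C is a vertex cover of G iff C is a sufficient
reason for the all-zeros vector with respect to the optimistic 1-NN classifier
under Hamming distance. -/
theorem vertex_cover_iff_sufficient_reason
    {n : ℕ} (G : SimpleGraph (Fin n)) [DecidableRel G.Adj] (C : Finset (Fin n)) :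
    let Sm : Finset (Fin n → Bool) :=
      G.edgeFinset.image (fun e => fun i => decide (i ∈ e))
    let Sp : Finset (Fin n → Bool) :=
      G.edgeFinset.biUnion (fun e =>
        (Finset.univ.filter (fun u => u ∈ e)).image
          (fun u => fun i => decide (i ∈ e) && !(decide (i = u))))
    let dH : (Fin n → Bool) → (Fin n → Bool) → ℕ :=
      fun u v => (Finset.univ.filter (fun i => u i ≠ v i)).card
    let f1 : (Fin n → Bool) → Prop :=
      fun z => ∃ a ∈ Sp, ∀ c ∈ Sm, dH z a ≤ dH z c
    ((∀ u v : Fin n, G.Adj u v → u ∈ C ∨ v ∈ C) ↔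
      (∀ y : Fin n → Bool, (∀ i ∈ C, y i = false) →
        (f1 y ↔ f1 (fun _ => false)))) := by
  intro Sm Sp dH f1
  exact VCaux.aux G C
end
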